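/- arXiv:2409.07944 — 2 statements merged into one kernel-verified Lean document; each statement's English description precedes it below -/
import Mathlib

section
/- Let L be a convex compact subset of a finite-dimensional normed space, r ∈ ℕ, and let (f_t)_{t ≥ 1} be a family of C^{r+1} functions on a neighbourhood of L with values in ℂ. Suppose there are constants A, B > 0 such that ‖D^r f_t(x)‖ ≤ A t^{-1/2} and ‖D^{r+1} f_t(x)‖ ≤ B t^{1/2} for all x ∈ L and t ≥ 1. Then for all x, y ∈ L and t ≥ 1, ‖D^r f_t(x) − D^r f_t(y)‖ ≤ (2AB)^{1/2} ‖x − y‖^{1/2}. -/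
/-- Let `L` be a convex compact subset of a finite-dimensional normed space, `r ∈ ℕ`, and
`(f t)_{t ≥ 1}` a family of `C^{r+1}` complex functions on an open neighbourhood `O` of `L`.
If `‖D^r f_t(x)‖ ≤ A t^{-1/2}` and `‖D^{r+1} f_t(x)‖ ≤ B t^{1/2}` on `L` for `t ≥ 1`, then
`‖D^r f_t(x) − D^r f_t(y)‖ ≤ (2AB)^{1/2} ‖x − y‖^{1/2}` for `x, y ∈ L` and `t ≥ 1`. -/
theorem holder_half_interpolation
    {F : Type*} [NormedAddCommGroup F] [NormedSpace ℝ F] [FiniteDimensional ℝ F]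
    (L : Set F) (hLc : IsCompact L) (hLconv : Convex ℝ L)
    (O : Set F) (hO : IsOpen O) (hLO : L ⊆ O)
    (r : ℕ) (f : ℝ → F → ℂ)
    (hreg : ∀ t : ℝ, 1 ≤ t → ContDiffOn ℝ (r + 1) (f t) O)
    (A B : ℝ) (hA : 0 < A) (hB : 0 < B)
    (hDr : ∀ t : ℝ, 1 ≤ t → ∀ x ∈ L,
      ‖iteratedFDerivWithin ℝ r (f t) O x‖ ≤ A * t ^ (-(1/2 : ℝ)))
    (hDr1 : ∀ t : ℝ, 1 ≤ t → ∀ x ∈ L,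
      ‖iteratedFDerivWithin ℝ (r + 1) (f t) O x‖ ≤ B * t ^ ((1/2 : ℝ))) :
    ∀ t : ℝ, 1 ≤ t → ∀ x ∈ L, ∀ y ∈ L,
      ‖iteratedFDerivWithin ℝ r (f t) O x - iteratedFDerivWithin ℝ r (f t) O y‖
        ≤ (2 * A * B) ^ (1/2 : ℝ) * ‖x - y‖ ^ (1/2 : ℝ) := by
  intro t ht x hx y hy
  have ht0 : (0 : ℝ) < t := lt_of_lt_of_le one_pos ht
  set g := iteratedFDerivWithin ℝ r (f t) O with hg
  -- g is differentiable on O with derivative fderivWithin O, of norm equal to D^{r+1}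
  have hdiff : DifferentiableOn ℝ g O := by
    exact (hreg t ht).differentiableOn_iteratedFDerivWithin
      (by exact_mod_cast Nat.lt_succ_self r) hO.uniqueDiffOn
  -- Mean value bound on L
  have hMVT : ‖g x - g y‖ ≤ B * t ^ ((1/2 : ℝ)) * ‖x - y‖ := by
    refine hLconv.norm_image_sub_le_of_norm_hasFDerivWithin_le
      (f' := fun z => fderivWithin ℝ g O z) (fun z hz => ?_) (fun z hz => ?_) hy hx
    · have hzO := hLO hz
      have : HasFDerivAt g (fderivWithin ℝ g O z) z := by
        have hdz : DifferentiableAt ℝ g z :=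
          (hdiff z hzO).differentiableAt (hO.mem_nhds hzO)
        rw [fderivWithin_of_isOpen hO hzO]
        exact hdz.hasFDerivAt
      exact this.hasFDerivWithinAt
    · rw [norm_fderivWithin_iteratedFDerivWithin]
      exact hDr1 t ht z hz
  have htri : ‖g x - g y‖ ≤ 2 * (A * t ^ (-(1/2 : ℝ))) :=
    (norm_sub_le _ _).trans (by
      have := hDr t ht x hx; have := hDr t ht y hy; linarith [hDr t ht x hx, hDr t ht y hy])
  -- combine: min of the two bounds is at most the geometric mean
  set a := 2 * (A * t ^ (-(1/2 : ℝ))) with ha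
  set b := B * t ^ ((1/2 : ℝ)) * ‖x - y‖ with hb
  have ha0 : 0 ≤ a := by positivity
  have hb0 : 0 ≤ b := by positivity
  have hab : a * b = 2 * A * B * ‖x - y‖ := by
    have : t ^ (-(1/2 : ℝ)) * t ^ ((1/2 : ℝ)) = 1 := by
      rw [← Real.rpow_add ht0]; simp
    rw [ha, hb]
    have h2 : 2 * (A * t ^ (-(1/2 : ℝ))) * (B * t ^ ((1/2 : ℝ)) * ‖x - y‖)
        = 2 * A * B * ‖x - y‖ * (t ^ (-(1/2 : ℝ)) * t ^ ((1/2 : ℝ))) := by ring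
    rw [h2, this, mul_one]
  have hmin : min a b ≤ Real.sqrt (a * b) := by
    have h1 : (min a b) ^ 2 ≤ a * b := by
      rcases le_total a b with h | h
      · rw [min_eq_left h, sq]; exact mul_le_mul_of_nonneg_left h ha0
      · rw [min_eq_right h, sq]; exact mul_le_mul_of_nonneg_right h hb0
    calc min a b = Real.sqrt ((min a b) ^ 2) := (Real.sqrt_sq (le_min ha0 hb0)).symm
      _ ≤ Real.sqrt (a * b) := Real.sqrt_le_sqrt h1
  have hfinal : ‖g x - g y‖ ≤ Real.sqrt (2 * A * B * ‖x - y‖) := by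
    calc ‖g x - g y‖ ≤ min a b := le_min htri hMVT
      _ ≤ Real.sqrt (a * b) := hmin
      _ = Real.sqrt (2 * A * B * ‖x - y‖) := by rw [hab]
  calc ‖g x - g y‖ ≤ Real.sqrt (2 * A * B * ‖x - y‖) := hfinal
    _ = (2 * A * B) ^ (1/2 : ℝ) * ‖x - y‖ ^ (1/2 : ℝ) := by
        rw [Real.sqrt_eq_rpow, Real.mul_rpow (by positivity) (norm_nonneg _)]
end

section
/- Let E be a finite-dimensional real vector space, U ⊆ E open with 0 in its closure, u_1,…,u_n ∈ E* distinct and nonzero, and f_1,…,f_n : E → ℂ continuous functions such that every open subset of U contains a point x with ∑_j |f_j(x)| ≠ 0. Then there exist C > 0, d > 0, a point x ∈ U, and an open set V with 0 ∈ closure(V), such that for all h ∈ V with y = x + h, all m ∈ ℕ, and all integers N ≥ d/‖h‖: (1/N) ∑_{t=m}^{m+N−1} |∑_{j=1}^n f_j(x) e^{i t u_j(x)} − f_j(y) e^{i t u_j(y)}|² ≥ C. -/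
/-!
The inner sum is `∑ₖ cₖ zₖ ^ t` with the `2n` coefficients `f_j(x)`, `-f_j(x+h)` and the points
`e^{i u_j(x)}`, `e^{i u_j(x+h)}` of the unit circle. Expanding the square and summing the geometric
series in `t`, the diagonal contributes exactly `N ∑ |cₖ|²`, while an off-diagonal pair at distance
`≥ δ` contributes at most `2 |cₖ| |cₗ| / δ`, whatever `N`.

By Baire, pick `x ∈ U` where the `e^{i u_j(x)}` are pairwise distinct and some `f_j(x) ≠ 0`, and let
`h` tend to `0` inside an open cone on which `|u_j(h)| > ε ‖h‖` for every `j`. Pairs with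
different indices `j ≠ k` stay boundedly apart as `h → 0`, while `e^{i u_j(x)}` and
`e^{i u_j(x+h)}` are at distance `≥ (2/π) ε ‖h‖` by Jordan's inequality. So the error term is
`O(1/‖h‖)`, which is at most half of the main term `N ∑ |f_j(x)|²` once `N ≥ d / ‖h‖`.
-/

open Complex Filter Topology Function
open scoped ComplexConjugate Real

theorem norm_geom_sum_Ico_le {w : ℂ} (hw : ‖w‖ = 1) (hw1 : w ≠ 1) (m N : ℕ) :
    ‖∑ t ∈ Finset.Ico m (m + N), w ^ t‖ ≤ 2 / ‖w - 1‖ := by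
  rw [geom_sum_Ico hw1 (Nat.le_add_right m N), norm_div]
  gcongr
  calc ‖w ^ (m + N) - w ^ m‖ ≤ ‖w ^ (m + N)‖ + ‖w ^ m‖ := norm_sub_le _ _
    _ = 2 := by norm_num [hw]

theorem norm_mul_conj_sub_one {z w : ℂ} (hw : ‖w‖ = 1) : ‖z * conj w - 1‖ = ‖z - w‖ := by
  have : z * conj w - 1 = (z - w) * conj w := by
    rw [sub_mul, mul_conj', hw]; simp
  rw [this, norm_mul, norm_conj, hw, mul_one]

theorem norm_sq_sum_mul_pow {ι : Type*} [Fintype ι] (c z : ι → ℂ) (t : ℕ) :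
    ((‖∑ k, c k * z k ^ t‖ ^ 2 : ℝ) : ℂ) =
      ∑ k, ∑ l, c k * conj (c l) * (z k * conj (z l)) ^ t := by
  rw [ofReal_pow, ← mul_conj', map_sum, Finset.sum_mul_sum]
  simp only [map_mul, map_pow]
  refine Finset.sum_congr rfl fun k _ => Finset.sum_congr rfl fun l _ => ?_
  ring

theorem sum_Ico_norm_sq_sum_mul_pow_ge {ι : Type*} [Fintype ι] (c z : ι → ℂ)
    (hz : ∀ k, ‖z k‖ = 1) {δ : ℝ} (hδ : 0 < δ) (hsep : Pairwise fun k l => δ ≤ ‖z k - z l‖)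
    (m N : ℕ) :
    N * ∑ k, ‖c k‖ ^ 2 - 2 / δ * (∑ k, ‖c k‖) ^ 2 ≤
      ∑ t ∈ Finset.Ico m (m + N), ‖∑ k, c k * z k ^ t‖ ^ 2 := by
  classical
  set G : ι → ι → ℂ := fun k l => ∑ t ∈ Finset.Ico m (m + N), (z k * conj (z l)) ^ t
  have hexpand : ((∑ t ∈ Finset.Ico m (m + N), ‖∑ k, c k * z k ^ t‖ ^ 2 : ℝ) : ℂ) =
      ∑ k, ∑ l, c k * conj (c l) * G k l := by
    simp only [ofReal_sum, norm_sq_sum_mul_pow, G, Finset.mul_sum]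
    rw [Finset.sum_comm]
    exact Finset.sum_congr rfl fun k _ => Finset.sum_comm
  have hterm : ∀ k l, ‖c k * conj (c l) * G k l - if k = l then ((N * ‖c k‖ ^ 2 : ℝ) : ℂ) else 0‖
      ≤ 2 / δ * (‖c k‖ * ‖c l‖) := by
    intro k l
    rcases eq_or_ne k l with rfl | hkl
    · have : G k k = N := by simp [G, mul_conj', hz]
      simp only [if_true, this, mul_conj', ofReal_mul, ofReal_natCast, ofReal_pow]
      rw [mul_comm, sub_self, norm_zero]
      positivity
    · have hsep' : δ ≤ ‖z k * conj (z l) - 1‖ := norm_mul_conj_sub_one (hz l) ▸ hsep hkl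
      have hG : ‖G k l‖ ≤ 2 / δ := by
        refine (norm_geom_sum_Ico_le (by simp [hz]) ?_ m N).trans ?_
        · intro h1
          rw [h1, sub_self, norm_zero] at hsep'
          linarith
        · gcongr
      rw [if_neg hkl, sub_zero, norm_mul, norm_mul, norm_conj, mul_comm]
      gcongr
  have hmain : |∑ t ∈ Finset.Ico m (m + N), ‖∑ k, c k * z k ^ t‖ ^ 2 - N * ∑ k, ‖c k‖ ^ 2|
      ≤ 2 / δ * (∑ k, ‖c k‖) ^ 2 := by
    have hdiag : ((N * ∑ k, ‖c k‖ ^ 2 : ℝ) : ℂ) =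
        ∑ k, ∑ l, if k = l then ((N * ‖c k‖ ^ 2 : ℝ) : ℂ) else 0 := by
      simp [Finset.mul_sum]
    calc _ = ‖∑ k, ∑ l, (c k * conj (c l) * G k l -
            if k = l then ((N * ‖c k‖ ^ 2 : ℝ) : ℂ) else 0)‖ := by
          simp only [Finset.sum_sub_distrib]
          rw [← hexpand, ← hdiag, ← ofReal_sub, norm_real, Real.norm_eq_abs]
      _ ≤ ∑ k, ∑ l, 2 / δ * (‖c k‖ * ‖c l‖) :=
          (norm_sum_le _ _).trans <| Finset.sum_le_sum fun k _ =>
            (norm_sum_le _ _).trans <| Finset.sum_le_sum fun l _ => hterm k l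
      _ = 2 / δ * (∑ k, ‖c k‖) ^ 2 := by
          rw [sq, Finset.sum_mul_sum, Finset.mul_sum]
          simp only [Finset.mul_sum]
  linarith [(abs_le.1 hmain).1]

theorem half_le_average_norm_sq_sum_mul_pow {ι : Type*} [Fintype ι] (c z : ι → ℂ)
    (hz : ∀ k, ‖z k‖ = 1) {δ : ℝ} (hδ : 0 < δ) (hsep : Pairwise fun k l => δ ≤ ‖z k - z l‖)
    {σ B : ℝ} (hσ : 0 < σ) (hcσ : σ ≤ ∑ k, ‖c k‖ ^ 2) (hcB : ∑ k, ‖c k‖ ≤ B)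
    {m N : ℕ} (hN : 4 * B ^ 2 / (δ * σ) ≤ N) :
    σ / 2 ≤ 1 / (N : ℝ) * ∑ t ∈ Finset.Ico m (m + N), ‖∑ k, c k * z k ^ t‖ ^ 2 := by
  have hcB2 : (∑ k, ‖c k‖) ^ 2 ≤ B ^ 2 := pow_le_pow_left₀ (by positivity) hcB 2
  have hσB : σ ≤ B ^ 2 :=
    hcσ.trans ((Finset.sum_sq_le_sq_sum_of_nonneg fun k _ => norm_nonneg (c k)).trans hcB2)
  have hNpos : 0 < (N : ℝ) := (div_pos (by linarith) (by positivity)).trans_le hN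
  have herr : 2 / δ * (∑ k, ‖c k‖) ^ 2 ≤ N * σ / 2 := by
    rw [div_le_iff₀ (by positivity)] at hN
    calc 2 / δ * (∑ k, ‖c k‖) ^ 2 ≤ 2 / δ * B ^ 2 := by gcongr
      _ ≤ N * σ / 2 := by rw [div_mul_eq_mul_div, div_le_iff₀ hδ]; nlinarith
  have := sum_Ico_norm_sq_sum_mul_pow_ge c z hz hδ hsep m N
  rw [one_div, inv_mul_eq_div, le_div_iff₀ hNpos]
  nlinarith

theorem dist_exp_I_mul (a b : ℝ) :
    dist (exp (I * a)) (exp (I * b)) = ‖2 * Real.sin ((a - b) / 2)‖ := by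
  have : exp (I * a) - exp (I * b) = (exp (I * ↑(a - b)) - 1) * exp (I * b) := by
    rw [sub_mul, ← exp_add]; push_cast; ring_nf
  rw [dist_eq_norm, this, norm_mul, norm_exp_I_mul_ofReal, mul_one,
    norm_exp_I_mul_ofReal_sub_one]

theorem two_div_pi_mul_abs_sub_le_dist_exp {a b : ℝ} (h : |a - b| ≤ π) :
    2 / π * |a - b| ≤ dist (exp (I * a)) (exp (I * b)) := by
  have hsin : 2 / π * (|a - b| / 2) ≤ Real.sin (|a - b| / 2) :=
    Real.mul_le_sin (by positivity) (by linarith)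
  rw [dist_exp_I_mul, norm_mul, Real.norm_eq_abs, Real.norm_eq_abs,
    Real.abs_sin_eq_sin_abs_of_abs_le_pi, abs_div, abs_two]
  · linarith
  · rw [abs_div, abs_two]; linarith [Real.pi_pos]

noncomputable def phases {ι : Type*} (a b : ι → ℝ) : ι ⊕ ι → ℂ :=
  Sum.elim (fun j => exp (I * a j)) (fun j => exp (I * b j))

theorem norm_phases {ι : Type*} (a b : ι → ℝ) (k : ι ⊕ ι) : ‖phases a b k‖ = 1 := by
  cases k <;> simp [phases, norm_exp_I_mul_ofReal]

theorem sum_elim_neg_mul_phases_pow {ι : Type*} [Fintype ι] (p q : ι → ℂ) (a b : ι → ℝ)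
    (t : ℕ) :
    ∑ k, Sum.elim p (fun j => -q j) k * phases a b k ^ t =
      ∑ j, (p j * exp (I * t * a j) - q j * exp (I * t * b j)) := by
  simp only [Fintype.sum_sum_type, phases, Sum.elim_inl, Sum.elim_inr, ← exp_nat_mul,
    Finset.sum_sub_distrib, neg_mul, Finset.sum_neg_distrib, ← sub_eq_add_neg]
  simp only [mul_left_comm (t : ℂ) I, mul_assoc]

theorem eventually_pairwise_le_dist_of_tendsto {X ι Y : Type*} [Finite ι] [MetricSpace Y]
    {l : Filter X} {z : X → ι → Y} {z₀ : ι → Y} (hz : Tendsto z l (𝓝 z₀))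
    {φ : X → ℝ} (hφ : Tendsto φ l (𝓝 0))
    (hcoll : ∀ k k', k ≠ k' → z₀ k = z₀ k' → ∀ᶠ y in l, φ y ≤ dist (z y k) (z y k')) :
    ∀ᶠ y in l, Pairwise fun k k' => φ y ≤ dist (z y k) (z y k') := by
  simp only [Pairwise, eventually_all]
  intro k k' hkk'
  by_cases h₀ : z₀ k = z₀ k'
  · exact hcoll k k' hkk' h₀
  · have hdist := (tendsto_pi_nhds.1 hz k).dist (tendsto_pi_nhds.1 hz k')
    exact (hφ.eventually_lt hdist (dist_pos.2 h₀)).mono fun _ => le_of_lt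

theorem exists_isOpen_mem_closure_of_eventually_nhdsWithin {X : Type*} [TopologicalSpace X]
    {K : Set X} {a : X} (hK : IsOpen K) (ha : a ∈ closure K) {P : X → Prop}
    (hP : ∀ᶠ y in 𝓝[K] a, P y) : ∃ V, IsOpen V ∧ a ∈ closure V ∧ ∀ y ∈ V, P y := by
  obtain ⟨S, hSo, haS, hSK⟩ := mem_nhdsWithin.1 hP
  exact ⟨S ∩ K, hSo.inter hK, hSo.inter_closure ⟨haS, ha⟩, hSK⟩

theorem dense_setOf_apply_notMem {F : Type*} [AddCommGroup F] [Module ℝ F] [TopologicalSpace F]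
    [IsTopologicalAddGroup F] [ContinuousSMul ℝ F] {w : F →ₗ[ℝ] ℝ} (hw : w ≠ 0) {S : Set ℝ}
    (hS : S.Countable) : Dense {y | w y ∉ S} :=
  (hS.dense_compl ℝ).preimage (w.isOpenMap_of_finiteDimensional (LinearMap.surjective hw))

section FiniteDimensional

variable {E : Type*} [NormedAddCommGroup E] [NormedSpace ℝ E] [FiniteDimensional ℝ E]

theorem isOpen_and_dense_setOf_injective_exp {ι : Type*} [Finite ι] {u : ι → E →ₗ[ℝ] ℝ}
    (hu : Injective u) :
    IsOpen {x : E | Injective fun j => exp (I * u j x)} ∧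
      Dense {x : E | Injective fun j => exp (I * u j x)} := by
  have hcont : ∀ j, Continuous (u j) := fun j => (u j).continuous_of_finiteDimensional
  set P : ι × ι → Set E := fun p => {x | exp (I * u p.1 x) = exp (I * u p.2 x) → p.1 = p.2}
  have hP : ∀ p, IsOpen (P p) ∧ Dense (P p) := by
    rintro ⟨j, k⟩
    by_cases hjk : j = k
    · simp [P, hjk, dense_univ]
    have hPjk : P (j, k) = {x | exp (I * u j x) ≠ exp (I * u k x)} := by
      ext; simp [P, hjk]
    rw [hPjk]
    refine ⟨isOpen_ne_fun (by fun_prop) (by fun_prop), (dense_setOf_apply_notMem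
      (sub_ne_zero.2 (hu.ne hjk)) (Set.countable_range fun m : ℤ => (m : ℝ) * (2 * π))).mono ?_⟩
    intro x hx heq
    obtain ⟨m, hm⟩ := exp_eq_exp_iff_exists_int.1 heq
    refine hx ⟨m, ?_⟩
    have : (((u j - u k) x : ℝ) : ℂ) = ((m * (2 * π) : ℝ) : ℂ) := by
      apply mul_left_cancel₀ I_ne_zero
      push_cast [LinearMap.sub_apply]
      linear_combination hm
    exact_mod_cast this.symm
  have hD : {x : E | Injective fun j => exp (I * u j x)} = ⋂ p, P p := by
    ext x; simp [P, Injective]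
  rw [hD]
  exact ⟨isOpen_iInter_of_finite fun p => (hP p).1,
    dense_iInter_of_isOpen (fun p => (hP p).1) fun p => (hP p).2⟩

theorem exists_isOpen_zero_mem_closure_forall_mul_norm_lt_abs {ι : Type*} [Finite ι]
    {u : ι → E →ₗ[ℝ] ℝ} (hu : ∀ j, u j ≠ 0) :
    ∃ ε > 0, ∃ K : Set E, IsOpen K ∧ (0 : E) ∈ closure K ∧ ∀ h ∈ K, ∀ j, ε * ‖h‖ < |u j h| := by
  have hdense : Dense (⋂ j, {y : E | u j y ∉ ({0} : Set ℝ)}) :=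
    dense_iInter_of_isOpen (fun j => isOpen_ne_fun (u j).continuous_of_finiteDimensional
      continuous_const) fun j => dense_setOf_apply_notMem (hu j) (Set.countable_singleton 0)
  obtain ⟨h₀, hh₀⟩ := hdense.nonempty
  simp only [Set.mem_iInter, Set.mem_ofPred_eq, Set.mem_singleton_iff] at hh₀
  have hsmall : ∀ᶠ ε in 𝓝 (0 : ℝ), ∀ j, ε * ‖h₀‖ < |u j h₀| :=
    eventually_all.2 fun j => Tendsto.eventually_lt_const (abs_pos.2 (hh₀ j))
      ((continuous_id.mul continuous_const).tendsto' 0 0 (zero_mul _))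
  obtain ⟨ε, hεh₀, hε⟩ := ((hsmall.filter_mono nhdsWithin_le_nhds).and
    (self_mem_nhdsWithin : Set.Ioi (0 : ℝ) ∈ 𝓝[>] 0)).exists
  refine ⟨ε, hε, {h | ∀ j, ε * ‖h‖ < |u j h|}, ?_, ?_, fun h hh => hh⟩
  · simp only [Set.ofPred_forall]
    exact isOpen_iInter_of_finite fun j =>
      isOpen_lt (by fun_prop) (u j).continuous_of_finiteDimensional.abs
  · have hray : Tendsto (fun t : ℝ => t • h₀) (𝓝[>] 0) (𝓝 0) :=
      ((continuous_id.smul continuous_const).tendsto' 0 0 (zero_smul _ _)).mono_left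
        nhdsWithin_le_nhds
    refine mem_closure_of_tendsto hray (eventually_nhdsWithin_of_forall fun t (ht : 0 < t) j => ?_)
    rw [norm_smul, map_smul, smul_eq_mul, abs_mul, Real.norm_eq_abs, abs_of_pos ht,
      mul_left_comm]
    exact mul_lt_mul_of_pos_left (hεh₀ j) ht

theorem eventually_pairwise_dist_phases_ge {ι : Type*} [Finite ι] (u : ι → E →ₗ[ℝ] ℝ) {x : E}
    (hx : Injective fun j => exp (I * u j x)) {ε : ℝ} {K : Set E}
    (hK : ∀ h ∈ K, ∀ j, ε * ‖h‖ < |u j h|) :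
    ∀ᶠ h in 𝓝[K] 0, Pairwise fun k k' =>
      2 / π * ε * ‖h‖ ≤ dist (phases (u · x) (fun j => u j (x + h)) k)
        (phases (u · x) (fun j => u j (x + h)) k') := by
  have hcont : ∀ j, Continuous (u j) := fun j => (u j).continuous_of_finiteDimensional
  have hnear : ∀ j, ∀ᶠ h in 𝓝[K] 0,
      2 / π * ε * ‖h‖ ≤ dist (exp (I * u j x)) (exp (I * u j (x + h))) := by
    intro j
    have hsmall : ∀ᶠ h in 𝓝[K] (0 : E), |u j h| ≤ π :=
      (((hcont j).abs.tendsto' 0 0 (by simp)).eventually_le_const Real.pi_pos).filter_mono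
        nhdsWithin_le_nhds
    filter_upwards [hsmall, eventually_mem_nhdsWithin] with h hπ hhK
    have habs : |u j x - u j (x + h)| = |u j h| := by
      rw [map_add, sub_add_cancel_left, abs_neg]
    calc 2 / π * ε * ‖h‖ = 2 / π * (ε * ‖h‖) := mul_assoc _ _ _
      _ ≤ 2 / π * |u j x - u j (x + h)| := by rw [habs]; gcongr; exact (hK h hhK j).le
      _ ≤ _ := two_div_pi_mul_abs_sub_le_dist_exp (habs ▸ hπ)
  refine eventually_pairwise_le_dist_of_tendsto (z₀ := phases (u · x) (u · x)) ?_ ?_ ?_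
  · have : Continuous fun h : E => phases (u · x) (fun j => u j (x + h)) :=
      continuous_pi fun k => by
        cases k <;> simp only [phases, Sum.elim_inl, Sum.elim_inr] <;> fun_prop
    simpa using (this.tendsto 0).mono_left nhdsWithin_le_nhds
  · have : Continuous fun h : E => 2 / π * ε * ‖h‖ := by fun_prop
    simpa using (this.tendsto 0).mono_left nhdsWithin_le_nhds
  · rintro (j | j) (k | k) hne h₀ <;> simp only [phases, Sum.elim_inl, Sum.elim_inr] at h₀ ⊢ <;>
      obtain rfl := hx h₀
    · exact absurd rfl hne
    · exact hnear j
    · simpa only [dist_comm] using hnear j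
    · exact absurd rfl hne

end FiniteDimensional

/-- Lower bound for averages of differences of exponential sums: if `u_1,…,u_n` are distinct
nonzero linear forms on a finite-dimensional real vector space `E`, `U ⊆ E` is open with `0`
in its closure, and the continuous functions `f_1,…,f_n` do not all vanish on any open subset
of `U`, then there exist `C > 0`, `d > 0`, `x ∈ U` and an open `V` with `0 ∈ closure V` such
that for all `h ∈ V`, `m ∈ ℕ` and `N ≥ d/‖h‖`,
`(1/N) ∑_{t=m}^{m+N−1} |∑_j f_j(x) e^{itu_j(x)} − f_j(x+h) e^{itu_j(x+h)}|² ≥ C`. -/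
theorem exp_sum_lower_bound
    {E : Type*} [NormedAddCommGroup E] [NormedSpace ℝ E] [FiniteDimensional ℝ E]
    (U : Set E) (hU : IsOpen U) (hU0 : (0 : E) ∈ closure U)
    (n : ℕ) (u : Fin n → E →ₗ[ℝ] ℝ) (hu_inj : Function.Injective u)
    (hu_ne : ∀ j, u j ≠ 0)
    (f : Fin n → E → ℂ) (hf : ∀ j, Continuous (f j))
    (hne : ∀ U' : Set E, U' ⊆ U → IsOpen U' → U'.Nonempty →
      ∃ x ∈ U', ∑ j, ‖f j x‖ ≠ 0) :
    ∃ C : ℝ, 0 < C ∧ ∃ d : ℝ, 0 < d ∧ ∃ x ∈ U, ∃ V : Set E, IsOpen V ∧ (0 : E) ∈ closure V ∧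
      ∀ h ∈ V, ∀ m N : ℕ, d / ‖h‖ ≤ (N : ℝ) →
        C ≤ (1 / (N : ℝ)) * ∑ t ∈ Finset.Ico m (m + N),
          ‖∑ j, (f j x * Complex.exp (Complex.I * t * (u j x))
            - f j (x + h) * Complex.exp (Complex.I * t * (u j (x + h))))‖ ^ 2 := by
  obtain ⟨hDo, hDd⟩ := isOpen_and_dense_setOf_injective_exp hu_inj
  obtain ⟨x, ⟨hxU, hx⟩, hfx⟩ := hne _ Set.inter_subset_left (hU.inter hDo)
    (hDd.inter_open_nonempty U hU (closure_nonempty_iff.1 ⟨0, hU0⟩))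
  set σ := ∑ j, ‖f j x‖ ^ 2
  obtain ⟨j₀, -, hj₀⟩ := Finset.exists_ne_zero_of_sum_ne_zero hfx
  have hσ : 0 < σ := (pow_pos ((norm_nonneg _).lt_of_ne' hj₀) 2).trans_le
    (Finset.single_le_sum (fun j _ => sq_nonneg ‖f j x‖) (Finset.mem_univ j₀))
  obtain ⟨ε, hε, K, hKo, hK0, hK⟩ := exists_isOpen_zero_mem_closure_forall_mul_norm_lt_abs hu_ne
  have hbound : ∀ᶠ h in 𝓝[K] 0,
      ∑ j, ‖f j x‖ + ∑ j, ‖f j (x + h)‖ < 2 * ∑ j, ‖f j x‖ + 1 := by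
    have : Continuous fun h => ∑ j, ‖f j x‖ + ∑ j, ‖f j (x + h)‖ := by fun_prop
    exact ((this.tendsto 0).eventually_lt_const (by simp [two_mul])).filter_mono
      nhdsWithin_le_nhds
  obtain ⟨V, hVo, hV0, hV⟩ := exists_isOpen_mem_closure_of_eventually_nhdsWithin hKo hK0
    (eventually_mem_nhdsWithin.and
      ((eventually_pairwise_dist_phases_ge u hx hK).and hbound))
  refine ⟨σ / 2, by positivity, 4 * (2 * ∑ j, ‖f j x‖ + 1) ^ 2 / (2 / π * ε * σ),
    by positivity, x, hxU, V, hVo, hV0, ?_⟩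
  intro h hh m N hN
  obtain ⟨hhK, hsep, hfh⟩ := hV h hh
  have hnorm : 0 < ‖h‖ := norm_pos_iff.2 fun h0 => by simpa [h0] using hK h hhK j₀
  simp_rw [← sum_elim_neg_mul_phases_pow]
  refine half_le_average_norm_sq_sum_mul_pow _ _ (norm_phases _ _)
    (δ := 2 / π * ε * ‖h‖) (B := 2 * ∑ j, ‖f j x‖ + 1) (by positivity)
    (hsep.mono fun k k' hkk' => by rwa [dist_eq_norm] at hkk') hσ ?_ ?_ ?_
  · simp only [Fintype.sum_sum_type, Sum.elim_inl, Sum.elim_inr, norm_neg, σ]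
    exact le_add_of_nonneg_right (by positivity)
  · simpa only [Fintype.sum_sum_type, Sum.elim_inl, Sum.elim_inr, norm_neg] using hfh.le
  · convert hN using 1
    field_simp
end
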